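/- Wexler–Raz biorthogonality relations: for every subgroup Λ of ZMod N × ZMod N and all g, h ∈ ℂ^N, the following are equivalent: (1) f = ∑_{λ∈Λ} ⟨f, π(λ)h⟩ · π(λ)g for all f ∈ ℂ^N; (2) ⟨g, π(μ)h⟩ = N/|Λ| if μ = 0 and ⟨g, π(μ)h⟩ = 0 for all μ ∈ Λ° with μ ≠ 0, where |Λ| is the cardinality of Λ. -/

import Mathlib

open Complex Finset

/-- The time-frequency shift `π(k,r)` on `ℂ^N ≅ (ZMod N → ℂ)`:
`(π(k,r)f)(j) = e^{2πi·rj/N} · f(j−k)`. -/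
noncomputable def tfShift (N : ℕ) (k r : ZMod N) : (ZMod N → ℂ) →ₗ[ℂ] (ZMod N → ℂ) where
  toFun f := fun j => Complex.exp (2 * Real.pi * Complex.I * (((r * j).val : ℂ) / (N : ℂ))) * f (j - k)
  map_add' f g := by
    funext j
    simp [mul_add]
  map_smul' c f := by
    funext j
    simp [Pi.smul_apply, smul_eq_mul]
    ring

/-- The inner product `⟨f,g⟩ = ∑ⱼ f(j)·conj(g(j))`, linear in the first argument. -/
noncomputable def inn {N : ℕ} [NeZero N] (f g : ZMod N → ℂ) : ℂ :=
  ∑ j, f j * starRingEnd ℂ (g j)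

/-- The short-time Fourier transform `V_g f(k,r) = ⟨f, π(k,r)g⟩`. -/
noncomputable def stft {N : ℕ} [NeZero N] (g f : ZMod N → ℂ) (k r : ZMod N) : ℂ :=
  inn f (tfShift N k r g)

/-- The adjoint subgroup `Λ° = {(k,r) : l·r − k·s = 0 in ZMod N for all (l,s) ∈ Λ}`,
as a set. -/
def adjSet {N : ℕ} (Λ : AddSubgroup (ZMod N × ZMod N)) : Set (ZMod N × ZMod N) :=
  {p | ∀ q ∈ Λ, q.1 * p.2 - p.1 * q.2 = 0}

/-- The underlying finite set of a subgroup `Λ` of `ZMod N × ZMod N`. -/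
noncomputable def subFinset {N : ℕ} [NeZero N] (Λ : AddSubgroup (ZMod N × ZMod N)) :
    Finset (ZMod N × ZMod N) :=
  Set.Finite.toFinset (Set.toFinite (Λ : Set (ZMod N × ZMod N)))

/-- The underlying finite set of the adjoint subgroup `Λ°`. -/
noncomputable def adjFinset {N : ℕ} [NeZero N] (Λ : AddSubgroup (ZMod N × ZMod N)) :
    Finset (ZMod N × ZMod N) :=
  Set.Finite.toFinset (Set.toFinite (adjSet Λ))

/-- The rank-one operator `f ↦ ⟨f,h⟩·g`. -/
noncomputable def rankOne {N : ℕ} [NeZero N] (g h : ZMod N → ℂ) :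
    (ZMod N → ℂ) →ₗ[ℂ] (ZMod N → ℂ) where
  toFun f := inn f h • g
  map_add' f f' := by
    simp [inn, add_mul, Finset.sum_add_distrib, add_smul]
  map_smul' c f := by
    simp [inn, Finset.mul_sum, mul_assoc, mul_smul, smul_smul]

/-- The Gabor frame-type operator `S_{g,h,Λ} f = ∑_{λ∈Λ} ⟨f, π(λ)h⟩ · π(λ)g`. -/
noncomputable def gaborTypeOp (N : ℕ) [NeZero N] (Λ : AddSubgroup (ZMod N × ZMod N))
    (g h : ZMod N → ℂ) : (ZMod N → ℂ) →ₗ[ℂ] (ZMod N → ℂ) :=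
  ∑ lam ∈ subFinset Λ, rankOne (tfShift N lam.1 lam.2 g) (tfShift N lam.1 lam.2 h)

/-! The operator `S = ∑_{λ∈Λ} ⟨·, π(λ)h⟩ π(λ)g` has the kernel
`K(j,m) = ∑_{λ∈Λ} e(λ₂(j-m)) g(j-λ₁) conj(h(m-λ₁))` with `e = ZMod.stdAddChar`, so `S = id` iff
`K = 1`, i.e. iff each diagonal `j ↦ K(j, j-k)` is the constant `δ_{k,0}`. After the
substitution `j ↦ j + λ₁`, the discrete Fourier transform of the `k`-th diagonal at `r` factors as
`⟨g, π(k,r)h⟩ · ∑_{λ∈Λ} e(-(λ₁r - kλ₂))`. The last sum is a character sum over `Λ`: it is `|Λ|`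
if `(k,r) ∈ Λ°` and `0` otherwise. The transform of the constant `δ_{k,0}` is `N·δ_{(k,r),0}`, and
comparing the two transforms gives the biorthogonality relations. -/

open ZMod ComplexConjugate

theorem AddChar.sum_addSubgroup_eq_ite {A R : Type*} [AddCommGroup A] [CommRing R] [IsDomain R]
    (ψ : AddChar A R) (H : AddSubgroup A) [Fintype H] [Decidable (∀ a ∈ H, ψ a = 1)] :
    ∑ a : H, ψ a = if ∀ a ∈ H, ψ a = 1 then (Fintype.card H : R) else 0 := by
  have h := AddChar.sum_eq_ite (ψ.compAddMonoidHom H.subtype)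
  simp only [compAddMonoidHom_apply, AddSubgroup.coe_subtype, AddChar.eq_zero_iff,
    Subtype.forall] at h
  convert h

theorem Matrix.eq_one_iff_forall_apply_sub {G R : Type*} [AddCommGroup G] [DecidableEq G]
    [Zero R] [One R] (M : Matrix G G R) :
    M = 1 ↔ ∀ k j, M j (j - k) = if k = 0 then 1 else 0 := by
  constructor
  · rintro rfl k j
    simp [Matrix.one_apply, eq_comm (a := j), sub_eq_self]
  · intro H
    ext j m
    simpa [Matrix.one_apply, sub_eq_zero, sub_sub_cancel] using H (j - m) j

section

variable {N : ℕ} [NeZero N]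

theorem ZMod.sum_stdAddChar_mul (b : ZMod N) :
    ∑ x : ZMod N, stdAddChar (x * b) = if b = 0 then (N : ℂ) else 0 := by
  rw [AddChar.sum_mulShift b (isPrimitive_stdAddChar N), ZMod.card]
  push_cast
  rfl

theorem ZMod.dft_const (c : ℂ) :
    𝓕 (fun _ : ZMod N ↦ c) = fun r ↦ if r = 0 then (N : ℂ) * c else 0 := by
  ext r
  simp_rw [dft_apply, smul_eq_mul, ← Finset.sum_mul, ← mul_neg, sum_stdAddChar_mul, neg_eq_zero]
  split_ifs <;> simp

theorem tfShift_apply (k r : ZMod N) (f : ZMod N → ℂ) (j : ZMod N) :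
    tfShift N k r f j = stdAddChar (r * j) * f (j - k) := by
  rw [stdAddChar_apply, toCircle_apply, mul_div_assoc]
  rfl

theorem inn_tfShift (g h : ZMod N → ℂ) (k r : ZMod N) :
    inn g (tfShift N k r h) = ∑ t, stdAddChar (-(t * r)) * g t * conj (h (t - k)) := by
  refine Finset.sum_congr rfl fun t _ ↦ ?_
  rw [tfShift_apply, map_mul, ← AddChar.map_neg_eq_conj, mul_comm r]
  ring

theorem mem_subFinset (Λ : AddSubgroup (ZMod N × ZMod N)) (p : ZMod N × ZMod N) :
    p ∈ subFinset Λ ↔ p ∈ Λ :=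
  Set.Finite.mem_toFinset _

open scoped Classical in
theorem sum_subFinset_stdAddChar (Λ : AddSubgroup (ZMod N × ZMod N)) (μ : ZMod N × ZMod N) :
    ∑ lam ∈ subFinset Λ, stdAddChar (-(lam.1 * μ.2 - μ.1 * lam.2))
      = if μ ∈ adjSet Λ then ((subFinset Λ).card : ℂ) else 0 := by
  let φ : ZMod N × ZMod N →+ ZMod N :=
    AddMonoidHom.mk' (fun lam ↦ -(lam.1 * μ.2 - μ.1 * lam.2)) fun a b ↦ by
      simp only [Prod.fst_add, Prod.snd_add]; ring
  have hφ : ∀ lam, stdAddChar (φ lam) = 1 ↔ lam.1 * μ.2 - μ.1 * lam.2 = 0 := fun lam ↦ by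
    rw [← AddChar.map_zero_eq_one (stdAddChar (N := N)), injective_stdAddChar.eq_iff]
    exact neg_eq_zero
  change ∑ lam ∈ subFinset Λ, stdAddChar.compAddMonoidHom φ lam = _
  rw [Finset.sum_subtype (subFinset Λ) (mem_subFinset Λ), AddChar.sum_addSubgroup_eq_ite,
    Fintype.card_of_subtype (subFinset Λ) (mem_subFinset Λ)]
  simp only [AddChar.compAddMonoidHom_apply, hφ]
  exact if_congr Iff.rfl rfl rfl

noncomputable def gaborKernel (Λ : AddSubgroup (ZMod N × ZMod N)) (g h : ZMod N → ℂ) :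
    Matrix (ZMod N) (ZMod N) ℂ :=
  Matrix.of fun j m ↦
    ∑ lam ∈ subFinset Λ, stdAddChar (lam.2 * (j - m)) * g (j - lam.1) * conj (h (m - lam.1))

theorem gaborTypeOp_eq_toLin' (Λ : AddSubgroup (ZMod N × ZMod N)) (g h : ZMod N → ℂ) :
    gaborTypeOp N Λ g h = Matrix.toLin' (gaborKernel Λ g h) := by
  refine LinearMap.ext fun f ↦ funext fun j ↦ ?_
  simp only [gaborTypeOp, LinearMap.coe_sum, Finset.sum_apply, rankOne, LinearMap.coe_mk,
    AddHom.coe_mk, Pi.smul_apply, smul_eq_mul, Matrix.toLin'_apply, Matrix.mulVec, dotProduct,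
    gaborKernel, Matrix.of_apply, inn, Finset.sum_mul]
  rw [Finset.sum_comm]
  refine Finset.sum_congr rfl fun m _ ↦ Finset.sum_congr rfl fun lam _ ↦ ?_
  have hchar :
      stdAddChar (lam.2 * (j - m)) = stdAddChar (lam.2 * j) * stdAddChar (-(lam.2 * m)) := by
    rw [← AddChar.map_add_eq_mul]
    ring_nf
  rw [tfShift_apply, tfShift_apply, map_mul, ← AddChar.map_neg_eq_conj, hchar]
  ring

theorem forall_gaborTypeOp_apply_eq_self_iff (Λ : AddSubgroup (ZMod N × ZMod N))
    (g h : ZMod N → ℂ) : (∀ f, gaborTypeOp N Λ g h f = f) ↔ gaborKernel Λ g h = 1 := by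
  rw [← Matrix.toLin'.injective.eq_iff, Matrix.toLin'_one, ← gaborTypeOp_eq_toLin',
    LinearMap.ext_iff]
  rfl

theorem dft_gaborKernel_apply_sub (Λ : AddSubgroup (ZMod N × ZMod N)) (g h : ZMod N → ℂ)
    (k r : ZMod N) :
    𝓕 (fun j ↦ gaborKernel Λ g h j (j - k)) r
      = inn g (tfShift N k r h) * ∑ lam ∈ subFinset Λ, stdAddChar (-(lam.1 * r - k * lam.2)) := by
  simp only [dft_apply, gaborKernel, Matrix.of_apply, smul_eq_mul, Finset.mul_sum,
    inn_tfShift, Finset.sum_mul]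
  rw [Finset.sum_comm]
  refine Finset.sum_congr rfl fun lam _ ↦
    (Fintype.sum_equiv (Equiv.addRight lam.1) _ _ fun t ↦ ?_).symm
  have hchar : stdAddChar (-((t + lam.1) * r)) * stdAddChar (lam.2 * k)
      = stdAddChar (-(t * r)) * stdAddChar (-(lam.1 * r - k * lam.2)) := by
    rw [← AddChar.map_add_eq_mul, ← AddChar.map_add_eq_mul]
    ring_nf
  simp only [Equiv.coe_addRight, sub_sub_cancel, add_sub_cancel_right, sub_right_comm _ k]
  linear_combination -(g t * conj (h (t - k))) * hchar

theorem forall_gaborTypeOp_apply_eq_self_iff_inn_mul_sum (Λ : AddSubgroup (ZMod N × ZMod N))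
    (g h : ZMod N → ℂ) :
    (∀ f, gaborTypeOp N Λ g h f = f) ↔ ∀ μ : ZMod N × ZMod N,
      inn g (tfShift N μ.1 μ.2 h) * ∑ lam ∈ subFinset Λ, stdAddChar (-(lam.1 * μ.2 - μ.1 * lam.2))
        = if μ = 0 then (N : ℂ) else 0 := by
  rw [forall_gaborTypeOp_apply_eq_self_iff, Matrix.eq_one_iff_forall_apply_sub, Prod.forall]
  refine forall_congr' fun k ↦ ?_
  rw [← funext_iff (f := fun j ↦ gaborKernel Λ g h j (j - k)) (g := fun _ ↦ if k = 0 then 1 else 0),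
    ← dft.injective.eq_iff, dft_const, funext_iff]
  refine forall_congr' fun r ↦ ?_
  rw [dft_gaborKernel_apply_sub]
  simp only [Prod.mk_eq_zero]
  split_ifs <;> simp_all

end

/-- **Wexler–Raz biorthogonality relations**: the reconstruction formula
`f = ∑_{λ∈Λ} ⟨f, π(λ)h⟩ · π(λ)g` holds for all `f ∈ ℂ^N` if and only if
`⟨g, π(μ)h⟩ = N/|Λ|` for `μ = 0` and `⟨g, π(μ)h⟩ = 0` for all `μ ∈ Λ°`, `μ ≠ 0`. -/
theorem wexler_raz_biorthogonality (N : ℕ) [NeZero N]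
    (Λ : AddSubgroup (ZMod N × ZMod N)) (g h : ZMod N → ℂ) :
    (∀ f : ZMod N → ℂ, gaborTypeOp N Λ g h f = f) ↔
      ∀ mu ∈ adjSet Λ, inn g (tfShift N mu.1 mu.2 h)
        = if mu = 0 then (N : ℂ) / ((subFinset Λ).card : ℂ) else 0 := by
  have hcard : ((subFinset Λ).card : ℂ) ≠ 0 :=
    Nat.cast_ne_zero.mpr (Finset.card_ne_zero_of_mem ((mem_subFinset Λ 0).mpr Λ.zero_mem))
  rw [forall_gaborTypeOp_apply_eq_self_iff_inn_mul_sum]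
  refine forall_congr' fun μ ↦ ?_
  by_cases hμ : μ ∈ adjSet Λ
  · rw [sum_subFinset_stdAddChar, if_pos hμ, ← eq_div_iff hcard, forall_prop_of_true hμ]
    split_ifs <;> simp
  · have hμ0 : μ ≠ 0 := by
      rintro rfl
      exact hμ fun _ _ ↦ by simp
    simp only [sum_subFinset_stdAddChar, hμ, hμ0, if_false, mul_zero, false_imp_iff]
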